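/- For every s ∈ μ_r, v ∈ A_1, and w ∈ A_r, the diamond product is given by v ⋄_s w = ψ_s(φ(v) * ψ_s^{-1}(w)), where * is the harmonic product. -/

import Mathlib

/-!
Both sides are bilinear, so it suffices to treat `v` and `u = ψ_s⁻¹(w)` built up letter by letter
from the right. Grade `A_r` by `μ_r`, a word having the product of its subscripts as its grade.
Then `ψ_s` acts on an appended letter by right multiplication: `ψ_s(u x) = ψ_s(u) z` and
`ψ_s(u y_t) = ψ_s(u) (z^δ_{s h t} - z)` for `u` of grade `h`. The harmonic product is
multiplicative for this grading and `φ(A_1)` lies in grade `1`, so the same formulas apply to the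
harmonic products that occur. With them, the recursive rules of `⋄_s` become the recursive rules of
`*` transported by `ψ_s`, and an induction on `u`, with an inner induction on `v` for each appended
letter, proves the identity.
-/

open FreeAlgebra

/-- Alphabet of `A_1 = ℚ⟨x,y⟩`. -/
inductive LetA : Type | x : LetA | y : LetA

/-- Alphabet of `A_r = ℚ⟨x, y_s : s ∈ μ_r⟩`; the group `G` plays the role of `μ_r`. -/
inductive LetR (G : Type) : Type | x : LetR G | y : G → LetR G

/-- `A_1 = ℚ⟨x, y⟩`. -/
abbrev A1 : Type := FreeAlgebra ℚ LetA

/-- `A_r = ℚ⟨x, y_s : s ∈ μ_r⟩`. -/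
abbrev Ar (G : Type) : Type := FreeAlgebra ℚ (LetR G)

noncomputable def X1 : A1 := ι ℚ LetA.x
noncomputable def Y1 : A1 := ι ℚ LetA.y

variable {G : Type} [CommGroup G]

noncomputable def Xr : Ar G := ι ℚ LetR.x
noncomputable def Yr (s : G) : Ar G := ι ℚ (LetR.y s)

/-- `z = x + y_1`. -/
noncomputable def zet : Ar G := Xr + Yr 1

open scoped Classical in
/-- `z_s^δ = x + δ(s) y_s` with `δ(1) = 0`, `δ(s) = 1` otherwise. -/
noncomputable def zdel (s : G) : Ar G := if s = 1 then Xr else Xr + Yr s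

/-- The involutive automorphism `φ` of `A_r`: `φ(x) = z`, `φ(y_s) = z_s^δ - z`. -/
noncomputable def phi : Ar G →ₐ[ℚ] Ar G :=
  lift ℚ (fun l => match l with
    | LetR.x => zet
    | LetR.y s => zdel s - zet)

/-- The natural embedding `A_1 → A_r`, `x ↦ x`, `y ↦ y_1`. -/
noncomputable def jm : A1 →ₐ[ℚ] Ar G :=
  lift ℚ (fun l => match l with
    | LetA.x => Xr
    | LetA.y => Yr 1)

open scoped Classical in
/-- The anti-automorphism `τ` of `A_r`: `τ(x) = y_1`, `τ(y_1) = x`, `τ(y_s) = -y_s` (`s ≠ 1`). -/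
noncomputable def tauR : Ar G →ₗ[ℚ] Ar G :=
  (MulOpposite.opLinearEquiv ℚ).symm.toLinearMap ∘ₗ
    (lift ℚ (fun l => match l with
      | LetR.x => MulOpposite.op (Yr 1)
      | LetR.y s => MulOpposite.op (if s = 1 then Xr else -(Yr s)) ) :
        Ar G →ₐ[ℚ] (Ar G)ᵐᵒᵖ).toLinearMap

/-- The anti-automorphism `τ` of `A_1`: `τ(x) = y`, `τ(y) = x`. -/
noncomputable def tau1 : A1 →ₗ[ℚ] A1 :=
  (MulOpposite.opLinearEquiv ℚ).symm.toLinearMap ∘ₗ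
    (lift ℚ (fun l => match l with
      | LetA.x => MulOpposite.op Y1
      | LetA.y => MulOpposite.op X1) : A1 →ₐ[ℚ] A1ᵐᵒᵖ).toLinearMap

/-- `wordP [(a₁,s₁),...,(a_l,s_l)] = x^{a₁} y_{s₁} ⋯ x^{a_l} y_{s_l}`,
i.e. the word `z_{a₁+1, s₁} ⋯ z_{a_l+1, s_l}`. -/
noncomputable def wordP (L : List (ℕ × G)) : Ar G :=
  (L.map (fun p => Xr ^ p.1 * Yr p.2)).prod

/-- Cumulative-product reindexing of subscripts: this realizes the composition `I ∘ M_s`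
on subscript lists, sending `(s₁, s₂, …, s_l)` to `(s s₁, s s₁ s₂, …, s s₁ ⋯ s_l)`. -/
def cumul : G → List (ℕ × G) → List (ℕ × G)
  | _, [] => []
  | g, p :: L => (p.1, g * p.2) :: cumul (g * p.2) L

/-- All the data entering the definition of the diamond products `⋄_s`:
the harmonic product `*`, the maps `ψ_s = φ ∘ I ∘ M_s`, and the family of
`ℚ`-bilinear diamond products `D s : A_1 × A_r → A_r` (together with the
corestriction `D1` of `⋄_1` to `A_1 × A_1 → A_1`), each characterized by its
defining recursive rules. -/
structure DiamondSetup (G : Type) [CommGroup G] where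
  /-- the harmonic product -/
  hst : Ar G →ₗ[ℚ] Ar G →ₗ[ℚ] Ar G
  one_hst : ∀ w, hst 1 w = w
  hst_one : ∀ v, hst v 1 = v
  hst_xr : ∀ v w, hst (v * Xr) w = hst v w * Xr
  hst_xl : ∀ v w, hst v (w * Xr) = hst v w * Xr
  hst_yy : ∀ (v w : Ar G) (s t : G), hst (v * Yr s) (w * Yr t) =
      hst v (w * Yr t) * Yr s + hst (v * Yr s) w * Yr t + hst v w * (Xr * Yr (s * t))
  /-- the linear automorphisms `ψ_s = φ ∘ I ∘ M_s` -/
  psi : G → (Ar G ≃ₗ[ℚ] Ar G)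
  psi_spec : ∀ (s : G) (L : List (ℕ × G)) (a : ℕ),
      psi s (wordP L * Xr ^ a) = phi (wordP (cumul s L) * Xr ^ a)
  /-- the diamond products `⋄_s : A_1 × A_r → A_r` -/
  D : G → A1 →ₗ[ℚ] Ar G →ₗ[ℚ] Ar G
  one_D : ∀ (s : G) (w : Ar G), D s 1 w = w
  D_one : ∀ (s : G) (v : A1), D s v 1 = psi s (phi (jm v))
  Dxx : ∀ (s : G) (v : A1) (w : Ar G), D s (v * X1) (w * Xr) =
      D s v (w * Xr) * Xr - D s (v * Y1) w * Xr
  Dyx : ∀ (s : G) (v : A1) (w : Ar G), D s (v * Y1) (w * Xr) =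
      D s v (w * Xr) * Yr 1 + D s (v * Y1) w * Xr
  Dxy : ∀ (s : G) (v : A1) (w : Ar G), D s (v * X1) (w * Yr 1) =
      D s v (w * Yr 1) * Xr + D s (v * X1) w * Yr 1
  Dyy : ∀ (s : G) (v : A1) (w : Ar G), D s (v * Y1) (w * Yr 1) =
      D s v (w * Yr 1) * Yr 1 - D s (v * X1) w * Yr 1
  Dxyt : ∀ (s t : G), t ≠ 1 → ∀ (v : A1) (w : Ar G), D s (v * X1) (w * Yr t) =
      D s v (w * Yr t) * Xr + D s v (w * (Xr + Yr t)) * Yr t - D s (v * Y1) w * Yr t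
  Dyyt : ∀ (s t : G), t ≠ 1 → ∀ (v : A1) (w : Ar G), D s (v * Y1) (w * Yr t) =
      D s v (w * Yr t) * Yr 1 - D s v (w * (Xr + Yr t)) * Yr t + D s (v * Y1) w * Yr t
  /-- `⋄_1` as a product `A_1 × A_1 → A_1` -/
  D1 : A1 →ₗ[ℚ] A1 →ₗ[ℚ] A1
  D1_spec : ∀ u v : A1, jm (D1 u v) = D 1 u (jm v)

theorem FreeAlgebra.induction_mul_ι {R X : Type*} [CommSemiring R]
    {P : FreeAlgebra R X → Prop} (one : P 1) (mul_ι : ∀ a x, P a → P (a * ι R x))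
    (add : ∀ a b, P a → P b → P (a + b)) (smul : ∀ (r : R) a, P a → P (r • a))
    (a : FreeAlgebra R X) : P a := by
  let N : Submodule R (FreeAlgebra R X) :=
    { carrier := {a | P a}
      add_mem' := add _ _
      zero_mem' := by simpa using smul 0 1 one
      smul_mem' := smul }
  suffices h : ∀ b, ∀ a ∈ N, a * b ∈ N from one_mul a ▸ h a 1 one
  intro b
  induction b using FreeAlgebra.induction with
  | grade0 r =>
    intro a ha
    rw [← Algebra.commutes, ← Algebra.smul_def]
    exact N.smul_mem r ha
  | grade1 x => exact fun a ha => mul_ι a x ha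
  | mul b c hb hc => exact fun a ha => mul_assoc a b c ▸ hc _ (hb a ha)
  | add b c hb hc => exact fun a ha => (mul_add a b c).symm ▸ N.add_mem (hb a ha) (hc a ha)

def wordGrade (L : List (ℕ × G)) : G := (L.map Prod.snd).prod

lemma wordGrade_concat (L : List (ℕ × G)) (p : ℕ × G) :
    wordGrade (L ++ [p]) = wordGrade L * p.2 := by
  simp [wordGrade]

lemma wordP_concat {G : Type} (L : List (ℕ × G)) (p : ℕ × G) :
    wordP (L ++ [p]) = wordP L * Xr ^ p.1 * Yr p.2 := by
  simp [wordP, mul_assoc]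

lemma cumul_concat (g : G) (L : List (ℕ × G)) (p : ℕ × G) :
    cumul g (L ++ [p]) = cumul g L ++ [(p.1, g * wordGrade L * p.2)] := by
  induction L generalizing g with
  | nil => simp [cumul, wordGrade]
  | cons q L ih => simp [cumul, ih, wordGrade, mul_assoc]

noncomputable def gradedPart (h : G) : Submodule ℚ (Ar G) :=
  Submodule.span ℚ {w | ∃ L a, wordGrade L = h ∧ w = wordP L * Xr ^ a}

lemma wordP_mul_pow_mem_gradedPart (L : List (ℕ × G)) (a : ℕ) :
    wordP L * Xr ^ a ∈ gradedPart (wordGrade L) :=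
  Submodule.subset_span ⟨L, a, rfl, rfl⟩

lemma wordP_mem_gradedPart (L : List (ℕ × G)) : wordP L ∈ gradedPart (wordGrade L) := by
  simpa using wordP_mul_pow_mem_gradedPart L 0

lemma one_mem_gradedPart : (1 : Ar G) ∈ gradedPart 1 :=
  wordP_mem_gradedPart []

lemma mul_Xr_mem_gradedPart {h : G} {w : Ar G} (hw : w ∈ gradedPart h) :
    w * Xr ∈ gradedPart h := by
  refine (Submodule.span_le (p := (gradedPart h).comap (LinearMap.mulRight ℚ Xr))).2 ?_ hw
  rintro _ ⟨L, a, rfl, rfl⟩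
  simpa [mul_assoc, ← pow_succ] using wordP_mul_pow_mem_gradedPart L (a + 1)

lemma mul_Yr_mem_gradedPart {h : G} {w : Ar G} (hw : w ∈ gradedPart h) (t : G) :
    w * Yr t ∈ gradedPart (h * t) := by
  refine (Submodule.span_le
    (p := (gradedPart (h * t)).comap (LinearMap.mulRight ℚ (Yr t)))).2 ?_ hw
  rintro _ ⟨L, a, rfl, rfl⟩
  simpa [wordP_concat, wordGrade_concat] using wordP_mem_gradedPart (L ++ [(a, t)])

theorem gradedPart_induction {P : ∀ h w, w ∈ gradedPart h → Prop}
    (zero : ∀ h, P h 0 (zero_mem _))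
    (add : ∀ h u w hu hw, P h u hu → P h w hw → P h (u + w) (add_mem hu hw))
    (smul : ∀ h (r : ℚ) w hw, P h w hw → P h (r • w) (Submodule.smul_mem _ r hw))
    (one : P 1 1 one_mem_gradedPart)
    (mul_Xr : ∀ h w hw, P h w hw → P h (w * Xr) (mul_Xr_mem_gradedPart hw))
    (mul_Yr : ∀ h w t hw, P h w hw → P (h * t) (w * Yr t) (mul_Yr_mem_gradedPart hw t))
    {h : G} {w : Ar G} (hw : w ∈ gradedPart h) : P h w hw := by
  have mul_pow (L : List (ℕ × G)) (hL : P _ _ (wordP_mem_gradedPart L)) (a : ℕ) :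
      P _ _ (wordP_mul_pow_mem_gradedPart L a) := by
    induction a with
    | zero => simpa using hL
    | succ a ih => simpa [pow_succ, mul_assoc] using mul_Xr _ _ _ ih
  have word (L : List (ℕ × G)) : P _ _ (wordP_mem_gradedPart L) := by
    induction L using List.reverseRecOn with
    | nil => exact one
    | append_singleton L p ih =>
      simpa [wordP_concat, wordGrade_concat] using mul_Yr _ _ p.2 _ (mul_pow L ih p.1)
  induction hw using Submodule.span_induction with
  | mem w hw =>
    obtain ⟨L, a, rfl, rfl⟩ := hw
    exact mul_pow L (word L) a
  | zero => exact zero h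
  | add u w hu hw Pu Pw => exact add h u w hu hw Pu Pw
  | smul r w hw Pw => exact smul h r w hw Pw

lemma iSup_gradedPart_eq_top : ⨆ h, gradedPart h = (⊤ : Submodule ℚ (Ar G)) := by
  refine Submodule.eq_top_iff'.2 fun w => ?_
  induction w using FreeAlgebra.induction_mul_ι with
  | one => exact Submodule.mem_iSup_of_mem 1 one_mem_gradedPart
  | mul_ι w l hw =>
    induction hw using Submodule.iSup_induction' with
    | mem h w hw =>
      cases l with
      | x => exact Submodule.mem_iSup_of_mem h (mul_Xr_mem_gradedPart hw)
      | y t => exact Submodule.mem_iSup_of_mem (h * t) (mul_Yr_mem_gradedPart hw t)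
    | zero => simp
    | add u w _ _ hu hw => simpa [add_mul] using add_mem hu hw
  | add u w hu hw => exact add_mem hu hw
  | smul r w hw => exact Submodule.smul_mem _ r hw

lemma phi_Xr : phi (Xr : Ar G) = zet := by
  simp [phi, Xr]

lemma phi_Yr (t : G) : phi (Yr t) = zdel t - zet := by
  simp [phi, Yr]

lemma zdel_one_sub_zet : (zdel 1 - zet : Ar G) = -Yr 1 := by
  simp [zdel, zet]

lemma jm_X1 : jm X1 = (Xr : Ar G) := by
  simp [jm, X1, Xr]

lemma jm_Y1 : jm Y1 = (Yr 1 : Ar G) := by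
  simp [jm, Y1, Yr]

lemma phi_jm_mul_X1 (v : A1) : phi (jm (v * X1)) = phi (jm v) * (zet : Ar G) := by
  rw [map_mul, map_mul, jm_X1, phi_Xr]

lemma phi_jm_mul_Y1 (v : A1) : phi (jm (v * Y1)) = -(phi (jm v) * (Yr 1 : Ar G)) := by
  rw [map_mul, map_mul, jm_Y1, phi_Yr, zdel_one_sub_zet, mul_neg]

lemma phi_jm_mem_gradedPart_one (v : A1) :
    phi (jm v) ∈ (gradedPart 1 : Submodule ℚ (Ar G)) := by
  induction v using FreeAlgebra.induction_mul_ι with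
  | one => simpa using one_mem_gradedPart
  | mul_ι v l hv =>
    have hy := mul_Yr_mem_gradedPart hv 1
    rw [one_mul] at hy
    cases l with
    | x =>
      change phi (jm (v * X1)) ∈ _
      rw [phi_jm_mul_X1, zet, mul_add]
      exact add_mem (mul_Xr_mem_gradedPart hv) hy
    | y =>
      change phi (jm (v * Y1)) ∈ _
      rw [phi_jm_mul_Y1]
      exact neg_mem hy
  | add u v hu hv => simpa using add_mem hu hv
  | smul r v hv => simpa using Submodule.smul_mem _ r hv

lemma span_wordP_mul_pow_eq_top :
    Submodule.span ℚ {w : Ar G | ∃ L a, w = wordP L * Xr ^ a} = ⊤ :=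
  eq_top_iff.2 <| (iSup_gradedPart_eq_top (G := G)).symm.le.trans <|
    iSup_le fun _ => Submodule.span_mono fun _ ⟨L, a, _, hw⟩ => ⟨L, a, hw⟩

namespace DiamondSetup

variable (S : DiamondSetup G)

lemma hst_mem_gradedPart {a b : G} {u w : Ar G} (hu : u ∈ gradedPart a)
    (hw : w ∈ gradedPart b) : S.hst u w ∈ gradedPart (a * b) := by
  induction hw using gradedPart_induction generalizing a u with
  | zero => simp
  | add b w₁ w₂ _ _ h₁ h₂ => simpa using add_mem (h₁ hu) (h₂ hu)
  | smul b r w _ h => simpa using Submodule.smul_mem _ r (h hu)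
  | one => simpa [S.hst_one] using hu
  | mul_Xr b w _ h => simpa [S.hst_xl] using mul_Xr_mem_gradedPart (h hu)
  | mul_Yr b w t hw h =>
    induction hu using gradedPart_induction with
    | zero => simp
    | add a u₁ u₂ _ _ h₁ h₂ => simpa using add_mem h₁ h₂
    | smul a r u _ h' => simpa using Submodule.smul_mem _ r h'
    | one => simpa [S.one_hst] using mul_Yr_mem_gradedPart hw t
    | mul_Xr a u _ h' => simpa [S.hst_xr] using mul_Xr_mem_gradedPart h'
    | mul_Yr a u s hu h' =>
      rw [S.hst_yy]
      refine add_mem (add_mem ?_ ?_) ?_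
      · convert mul_Yr_mem_gradedPart h' s using 2
        ac_rfl
      · convert mul_Yr_mem_gradedPart (h (mul_Yr_mem_gradedPart hu s)) t using 2
        ac_rfl
      · rw [← mul_assoc (S.hst u w)]
        convert mul_Yr_mem_gradedPart (mul_Xr_mem_gradedPart (h hu)) (s * t) using 2
        ac_rfl

variable (s : G)

lemma psi_one : S.psi s 1 = 1 := by
  simpa [cumul, wordP] using S.psi_spec s [] 0

lemma psi_mul_Xr (w : Ar G) : S.psi s (w * Xr) = S.psi s w * zet := by
  have hw : w ∈ Submodule.span ℚ {w : Ar G | ∃ L a, w = wordP L * Xr ^ a} :=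
    span_wordP_mul_pow_eq_top (G := G) ▸ Submodule.mem_top
  induction hw using Submodule.span_induction with
  | mem w hw =>
    obtain ⟨L, a, rfl⟩ := hw
    rw [mul_assoc, ← pow_succ, S.psi_spec, S.psi_spec, pow_succ, ← mul_assoc, map_mul, phi_Xr]
  | zero => simp
  | add u w _ _ hu hw => simp [add_mul, hu, hw]
  | smul r w _ hw => simp [hw]

-- `I ∘ M_s` turns the subscript `t` of a letter appended to a word of grade `h` into `s h t`.
lemma psi_mul_Yr {h : G} {w : Ar G} (hw : w ∈ gradedPart h) (t : G) {g : G}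
    (hg : s * h * t = g) : S.psi s (w * Yr t) = S.psi s w * (zdel g - zet) := by
  subst hg
  induction hw using Submodule.span_induction with
  | mem w hw =>
    obtain ⟨L, a, rfl, rfl⟩ := hw
    have hword : wordP L * Xr ^ a * Yr t = wordP (L ++ [(a, t)]) * Xr ^ 0 := by
      simp [wordP_concat]
    rw [hword, S.psi_spec, cumul_concat, pow_zero, mul_one, wordP_concat, map_mul,
      ← S.psi_spec, phi_Yr]
  | zero => simp
  | add u w _ _ hu hw => simp [add_mul, hu, hw]
  | smul r w _ hw => simp [hw]

lemma D_mul_X1_mul_zet (v : A1) (W : Ar G) :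
    S.D s (v * X1) (W * zet) =
      S.D s v (W * zet) * Xr - S.D s (v * Y1) W * Xr + S.D s (v * X1) W * Yr 1 := by
  simp only [zet, mul_add, map_add, add_mul, S.Dxx, S.Dxy]
  abel

lemma D_mul_Y1_mul_zet (v : A1) (W : Ar G) :
    S.D s (v * Y1) (W * zet) =
      S.D s v (W * zet) * Yr 1 + S.D s (v * Y1) W * Xr - S.D s (v * X1) W * Yr 1 := by
  simp only [zet, mul_add, map_add, add_mul, S.Dyx, S.Dyy]
  abel

-- `zdel g - Xr` is `0` for `g = 1` and `y_g` otherwise, so this one formula packages the rules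
-- for `y_1` and for `y_t`, `t ≠ 1`.
lemma D_mul_X1_mul_zdel_sub_zet (v : A1) (W : Ar G) (g : G) :
    S.D s (v * X1) (W * (zdel g - zet)) =
      S.D s v (W * (zdel g - zet)) * Xr
        + (S.D s v (W * zet) + S.D s v (W * (zdel g - zet)) - S.D s (v * Y1) W) * (zdel g - Xr)
        - S.D s (v * X1) W * Yr 1 := by
  rcases eq_or_ne g 1 with rfl | hg
  · rw [zdel_one_sub_zet, show (zdel 1 : Ar G) - Xr = 0 by simp [zdel]]
    simp only [mul_neg, map_neg, S.Dxy, mul_zero]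
    noncomm_ring
  · simp only [zdel, hg, if_false, zet, add_sub_add_left_eq_sub, add_sub_cancel_left, mul_add,
      mul_sub, map_add, map_sub, S.Dxyt s g hg, S.Dxy]
    noncomm_ring

lemma D_mul_Y1_mul_zdel_sub_zet (v : A1) (W : Ar G) (g : G) :
    S.D s (v * Y1) (W * (zdel g - zet)) =
      S.D s v (W * (zdel g - zet)) * Yr 1
        - (S.D s v (W * zet) + S.D s v (W * (zdel g - zet)) - S.D s (v * Y1) W) * (zdel g - Xr)
        + S.D s (v * X1) W * Yr 1 := by
  rcases eq_or_ne g 1 with rfl | hg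
  · rw [zdel_one_sub_zet, show (zdel 1 : Ar G) - Xr = 0 by simp [zdel]]
    simp only [mul_neg, map_neg, S.Dyy, mul_zero]
    noncomm_ring
  · simp only [zdel, hg, if_false, zet, add_sub_add_left_eq_sub, add_sub_cancel_left, mul_add,
      mul_sub, map_add, map_sub, S.Dyyt s g hg, S.Dyy]
    noncomm_ring

lemma hst_mul_zet_left (p w : Ar G) :
    S.hst (p * zet) w = S.hst p w * Xr + S.hst (p * Yr 1) w := by
  rw [zet, mul_add, map_add, LinearMap.add_apply, S.hst_xr]

lemma psi_hst_mul_Yr_one_mul_Yr {p u : Ar G} {h : G} (hp : p ∈ gradedPart 1)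
    (hu : u ∈ gradedPart h) (t : G) {g : G} (hg : s * h * t = g) :
    S.psi s (S.hst (p * Yr 1) (u * Yr t)) =
      (S.psi s (S.hst p (u * Yr t)) + S.psi s (S.hst (p * Yr 1) u) + S.psi s (S.hst p u) * zet)
        * (zdel g - zet) := by
  have h₁ := S.hst_mem_gradedPart hp (mul_Yr_mem_gradedPart hu t)
  have h₂ := S.hst_mem_gradedPart (mul_Yr_mem_gradedPart hp 1) hu
  have h₃ := mul_Xr_mem_gradedPart (S.hst_mem_gradedPart hp hu)
  rw [S.hst_yy, one_mul, ← mul_assoc (S.hst p u), map_add, map_add,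
    S.psi_mul_Yr s h₁ 1 (g := g) (by simp [← hg, mul_assoc]),
    S.psi_mul_Yr s h₂ t (g := g) (by simp [← hg, mul_assoc]),
    S.psi_mul_Yr s h₃ t (g := g) (by simp [← hg, mul_assoc]), S.psi_mul_Xr, add_mul, add_mul]

lemma D_mul_X1_psi {u : Ar G}
    (hu : ∀ v, S.D s v (S.psi s u) = S.psi s (S.hst (phi (jm v)) u)) (v : A1) :
    S.D s (v * X1) (S.psi s u) =
      S.psi s (S.hst (phi (jm v)) u) * zet + S.psi s (S.hst (phi (jm v) * Yr 1) u) := by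
  rw [hu, phi_jm_mul_X1, S.hst_mul_zet_left, map_add, S.psi_mul_Xr]

lemma D_mul_Y1_psi {u : Ar G}
    (hu : ∀ v, S.D s v (S.psi s u) = S.psi s (S.hst (phi (jm v)) u)) (v : A1) :
    S.D s (v * Y1) (S.psi s u) = -S.psi s (S.hst (phi (jm v) * Yr 1) u) := by
  rw [hu, phi_jm_mul_Y1, map_neg, LinearMap.neg_apply, map_neg]

lemma D_psi_mul_Xr {u : Ar G}
    (hu : ∀ v, S.D s v (S.psi s u) = S.psi s (S.hst (phi (jm v)) u)) (v : A1) :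
    S.D s v (S.psi s (u * Xr)) = S.psi s (S.hst (phi (jm v)) (u * Xr)) := by
  induction v using FreeAlgebra.induction_mul_ι with
  | one => simp [S.one_D, S.one_hst]
  | mul_ι v l ih =>
    rw [S.hst_xl, S.psi_mul_Xr, S.psi_mul_Xr] at ih
    cases l with
    | x =>
      change S.D s (v * X1) _ = S.psi s (S.hst (phi (jm (v * X1))) _)
      rw [S.psi_mul_Xr, S.D_mul_X1_mul_zet, ih, S.D_mul_X1_psi s hu, S.D_mul_Y1_psi s hu,
        phi_jm_mul_X1, S.hst_xl, S.psi_mul_Xr, S.hst_mul_zet_left, map_add, S.psi_mul_Xr]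
      simp only [zet]
      noncomm_ring
    | y =>
      change S.D s (v * Y1) _ = S.psi s (S.hst (phi (jm (v * Y1))) _)
      rw [S.psi_mul_Xr, S.D_mul_Y1_mul_zet, ih, S.D_mul_X1_psi s hu, S.D_mul_Y1_psi s hu,
        phi_jm_mul_Y1, map_neg, LinearMap.neg_apply, S.hst_xl, map_neg, S.psi_mul_Xr]
      simp only [zet]
      noncomm_ring
  | add v₁ v₂ h₁ h₂ => simp [h₁, h₂]
  | smul r v h => simp [h]

lemma D_psi_mul_Yr {h : G} {u : Ar G} (hmem : u ∈ gradedPart h)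
    (hu : ∀ v, S.D s v (S.psi s u) = S.psi s (S.hst (phi (jm v)) u)) (t : G) (v : A1) :
    S.D s v (S.psi s (u * Yr t)) = S.psi s (S.hst (phi (jm v)) (u * Yr t)) := by
  generalize hg : s * h * t = g
  induction v using FreeAlgebra.induction_mul_ι with
  | one => simp [S.one_D, S.one_hst]
  | mul_ι v l ih =>
    have hP := phi_jm_mem_gradedPart_one (G := G) v
    have hux : S.D s v (S.psi s u * zet) = S.psi s (S.hst (phi (jm v)) u) * zet := by
      rw [← S.psi_mul_Xr, S.D_psi_mul_Xr s hu, S.hst_xl, S.psi_mul_Xr]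
    rw [S.psi_mul_Yr s hmem t hg] at ih
    cases l with
    | x =>
      change S.D s (v * X1) _ = S.psi s (S.hst (phi (jm (v * X1))) _)
      rw [S.psi_mul_Yr s hmem t hg, S.D_mul_X1_mul_zdel_sub_zet, ih, hux, S.D_mul_X1_psi s hu,
        S.D_mul_Y1_psi s hu, phi_jm_mul_X1, S.hst_mul_zet_left, map_add,
        S.psi_mul_Xr, S.psi_hst_mul_Yr_one_mul_Yr s hP hmem t hg]
      simp only [zet]
      noncomm_ring
    | y =>
      change S.D s (v * Y1) _ = S.psi s (S.hst (phi (jm (v * Y1))) _)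
      rw [S.psi_mul_Yr s hmem t hg, S.D_mul_Y1_mul_zdel_sub_zet, ih, hux, S.D_mul_X1_psi s hu,
        S.D_mul_Y1_psi s hu, phi_jm_mul_Y1, map_neg, LinearMap.neg_apply, map_neg,
        S.psi_hst_mul_Yr_one_mul_Yr s hP hmem t hg]
      simp only [zet]
      noncomm_ring
  | add v₁ v₂ h₁ h₂ => simp [h₁, h₂]
  | smul r v h => simp [h]

lemma D_psi_of_mem_gradedPart {h : G} {u : Ar G} (hu : u ∈ gradedPart h) (v : A1) :
    S.D s v (S.psi s u) = S.psi s (S.hst (phi (jm v)) u) := by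
  induction hu using gradedPart_induction generalizing v with
  | zero => simp
  | add h u₁ u₂ _ _ h₁ h₂ => simp [h₁, h₂]
  | smul h r u _ hu => simp [hu]
  | one => simp [S.psi_one, S.D_one, S.hst_one]
  | mul_Xr h u _ hu => exact S.D_psi_mul_Xr s hu v
  | mul_Yr h u t hmem hu => exact S.D_psi_mul_Yr s hmem hu t v

lemma D_psi (u : Ar G) (v : A1) : S.D s v (S.psi s u) = S.psi s (S.hst (phi (jm v)) u) := by
  have hu : u ∈ ⨆ h, gradedPart h := iSup_gradedPart_eq_top (G := G) ▸ Submodule.mem_top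
  induction hu using Submodule.iSup_induction' with
  | mem h u hu => exact S.D_psi_of_mem_gradedPart s hu v
  | zero => simp
  | add u₁ u₂ _ _ h₁ h₂ => simp [h₁, h₂]

end DiamondSetup

/-- For every `s ∈ μ_r`, `v ∈ A_1`, `w ∈ A_r`:
`v ⋄_s w = ψ_s(φ(v) * ψ_s⁻¹(w))`, where `*` is the harmonic product. -/
theorem statement4 {G : Type} [CommGroup G] (S : DiamondSetup G)
    (s : G) (v : A1) (w : Ar G) :
    S.D s v w = S.psi s (S.hst (phi (jm v)) ((S.psi s).symm w)) := by
  simpa using S.D_psi s ((S.psi s).symm w) v
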